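/- Let h, c ∈ ℝ and let I ⊆ (0, ∞) be an open interval on which U² − h² > 0, U² + c > 0, and P(U) := U⁴ + (c − 1 − h²)·U² − h²·c > 0. Let R, Λ, Θ : I → ℝ be C² functions with R(U) = √(U² − h²), Λ'(U) = (U/(U² − h²))·√(P(U)), and Θ'(U) = (h/U²)·Λ'(U). Define X(U,t) = (R(U)·cos(t − Θ(U)), R(U)·sin(t − Θ(U)), Λ(U) + h·(t − Θ(U))). Then at every point of I × ℝ the Gaussian curvature of X equals 1/(U² + c)² and the fourth power of the angle function equals 1/(U² + c)²; hence K = n₃⁴, i.e., each helicoidal surface H^h_c is a K^{1/4}-translator. -/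

import Mathlib

open Real

noncomputable section

/-- Euclidean dot product on `ℝ³ = ℝ × ℝ × ℝ`. -/
def dot3 (v w : ℝ × ℝ × ℝ) : ℝ := v.1 * w.1 + v.2.1 * w.2.1 + v.2.2 * w.2.2

/-- Cross product on `ℝ³ = ℝ × ℝ × ℝ`. -/
def cross3 (v w : ℝ × ℝ × ℝ) : ℝ × ℝ × ℝ :=
  (v.2.1 * w.2.2 - v.2.2 * w.2.1,
   v.2.2 * w.1 - v.1 * w.2.2,
   v.1 * w.2.1 - v.2.1 * w.1)

/-- The vertical unit vector `e₃ = (0,0,1)`. -/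
def e3 : ℝ × ℝ × ℝ := ((0 : ℝ), (0 : ℝ), (1 : ℝ))

/-- Partial derivative of a parametrized surface w.r.t. the first parameter. -/
def pd1 (X : ℝ → ℝ → ℝ × ℝ × ℝ) (s t : ℝ) : ℝ × ℝ × ℝ := deriv (fun u => X u t) s

/-- Partial derivative of a parametrized surface w.r.t. the second parameter. -/
def pd2 (X : ℝ → ℝ → ℝ × ℝ × ℝ) (s t : ℝ) : ℝ × ℝ × ℝ := deriv (fun v => X s v) t

/-- Unit normal `n = (X_s × X_t)/‖X_s × X_t‖`. -/
def unitNormal (X : ℝ → ℝ → ℝ × ℝ × ℝ) (s t : ℝ) : ℝ × ℝ × ℝ :=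
  (Real.sqrt (dot3 (cross3 (pd1 X s t) (pd2 X s t)) (cross3 (pd1 X s t) (pd2 X s t))))⁻¹ •
    cross3 (pd1 X s t) (pd2 X s t)

/-- Angle function `n₃ = n · e₃`. -/
def angleFun (X : ℝ → ℝ → ℝ × ℝ × ℝ) (s t : ℝ) : ℝ := dot3 (unitNormal X s t) e3

/-- Gaussian curvature `K = ((X_ss·n)(X_tt·n) − (X_st·n)²)/(EG − F²)`. -/
def gauss (X : ℝ → ℝ → ℝ × ℝ × ℝ) (s t : ℝ) : ℝ :=
  (dot3 (pd1 (pd1 X) s t) (unitNormal X s t) * dot3 (pd2 (pd2 X) s t) (unitNormal X s t)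
      - (dot3 (pd2 (pd1 X) s t) (unitNormal X s t)) ^ 2)
    / (dot3 (pd1 X s t) (pd1 X s t) * dot3 (pd2 X s t) (pd2 X s t)
        - (dot3 (pd1 X s t) (pd2 X s t)) ^ 2)

/-!
In the frame `(cos φ, sin φ, 0), (sin φ, -cos φ, 0), e₃` with `φ = t - Θ(U)` the surface is
`(R, 0, Λ + h φ)`, and every partial derivative of `X` up to order two again has frame coordinates
depending on `U` alone. Since the frame is orthonormal, `K` and `n₃` become rational expressions in
`R, R', R'', Λ', Λ'', Θ'` (with `Θ''` cancelling). For the profile of `H^h_c` the identity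
`P(U) = (U² - h²)(U² + c) - U²` makes the normal `X_U × X_t` have squared length `U²(U² + c)`,
with third component `U`, and collapses the numerator of `K` to `U⁴`.
-/

open Filter Topology

theorem dot3_smul_left (k : ℝ) (v w : ℝ × ℝ × ℝ) : dot3 (k • v) w = k * dot3 v w := by
  simp only [dot3, Prod.smul_fst, Prod.smul_snd, smul_eq_mul]; ring

theorem dot3_smul_right (k : ℝ) (v w : ℝ × ℝ × ℝ) : dot3 v (k • w) = k * dot3 v w := by
  simp only [dot3, Prod.smul_fst, Prod.smul_snd, smul_eq_mul]; ring

theorem dot3_self_nonneg (v : ℝ × ℝ × ℝ) : 0 ≤ dot3 v v := by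
  unfold dot3
  exact add_nonneg (add_nonneg (mul_self_nonneg _) (mul_self_nonneg _)) (mul_self_nonneg _)

theorem dot3_e3 (v : ℝ × ℝ × ℝ) : dot3 v e3 = v.2.2 := by
  simp only [dot3, e3]; ring

theorem dot3_cross3_self (v w : ℝ × ℝ × ℝ) :
    dot3 (cross3 v w) (cross3 v w) = dot3 v v * dot3 w w - dot3 v w ^ 2 := by
  simp only [dot3, cross3]; ring

theorem gauss_eq_div_sq {X : ℝ → ℝ → ℝ × ℝ × ℝ} {s t : ℝ} {N : ℝ × ℝ × ℝ}
    (hN : cross3 (pd1 X s t) (pd2 X s t) = N) :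
    gauss X s t = (dot3 (pd1 (pd1 X) s t) N * dot3 (pd2 (pd2 X) s t) N
      - dot3 (pd2 (pd1 X) s t) N ^ 2) / dot3 N N ^ 2 := by
  have hEG : dot3 (pd1 X s t) (pd1 X s t) * dot3 (pd2 X s t) (pd2 X s t)
      - dot3 (pd1 X s t) (pd2 X s t) ^ 2 = dot3 N N := by
    rw [← hN, dot3_cross3_self]
  have hsq : (√(dot3 N N))⁻¹ ^ 2 = (dot3 N N)⁻¹ := by
    rw [inv_pow, sq_sqrt (dot3_self_nonneg N)]
  rw [gauss, unitNormal, hN, hEG, dot3_smul_right, dot3_smul_right, dot3_smul_right]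
  calc _ = (√(dot3 N N))⁻¹ ^ 2 * (dot3 (pd1 (pd1 X) s t) N * dot3 (pd2 (pd2 X) s t) N
        - dot3 (pd2 (pd1 X) s t) N ^ 2) / dot3 N N := by ring
    _ = _ := by rw [hsq, div_eq_mul_inv, div_eq_mul_inv, ← inv_pow]; ring

theorem angleFun_eq_div_sqrt {X : ℝ → ℝ → ℝ × ℝ × ℝ} {s t : ℝ} {N : ℝ × ℝ × ℝ}
    (hN : cross3 (pd1 X s t) (pd2 X s t) = N) :
    angleFun X s t = N.2.2 / √(dot3 N N) := by
  rw [angleFun, unitNormal, hN, dot3_smul_left, dot3_e3, div_eq_inv_mul]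

/-- Coordinates in the orthonormal frame `(cos φ, sin φ, 0), (sin φ, -cos φ, 0), e₃`; the frame is
negatively oriented, hence the swap in `cross3_frame`. -/
def frame (φ : ℝ) (v : ℝ × ℝ × ℝ) : ℝ × ℝ × ℝ :=
  (v.1 * cos φ + v.2.1 * sin φ, v.1 * sin φ - v.2.1 * cos φ, v.2.2)

theorem dot3_frame (φ : ℝ) (v w : ℝ × ℝ × ℝ) : dot3 (frame φ v) (frame φ w) = dot3 v w := by
  simp only [dot3, frame]; linear_combination (v.1 * w.1 + v.2.1 * w.2.1) * sin_sq_add_cos_sq φ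

theorem cross3_frame (φ : ℝ) (v w : ℝ × ℝ × ℝ) :
    cross3 (frame φ v) (frame φ w) = frame φ (cross3 w v) := by
  simp only [cross3, frame]
  refine Prod.ext ?_ (Prod.ext ?_ ?_) <;> dsimp only
  · ring
  · ring
  · linear_combination (w.1 * v.2.1 - v.1 * w.2.1) * sin_sq_add_cos_sq φ

theorem HasDerivAt.frame {φ a b z : ℝ → ℝ} {φ' a' b' z' x : ℝ} (hφ : HasDerivAt φ φ' x)
    (ha : HasDerivAt a a' x) (hb : HasDerivAt b b' x) (hz : HasDerivAt z z' x) :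
    HasDerivAt (fun y => _root_.frame (φ y) (a y, b y, z y))
      (_root_.frame (φ x) (a' + φ' * b x, b' - φ' * a x, z')) x := by
  have h1 := (ha.mul hφ.cos).add (hb.mul hφ.sin)
  have h2 := (ha.mul hφ.sin).sub (hb.mul hφ.cos)
  exact (h1.prodMk (h2.prodMk hz)).congr_deriv (by ext <;> simp only [_root_.frame] <;> ring)

def helicoid (h : ℝ) (r l θ : ℝ → ℝ) (u t : ℝ) : ℝ × ℝ × ℝ :=
  frame (t - θ u) (r u, 0, l u + h * (t - θ u))

section Helicoid

variable {h : ℝ} {r l θ : ℝ → ℝ}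

theorem pd2_helicoid (u t : ℝ) : pd2 (helicoid h r l θ) u t = frame (t - θ u) (0, -r u, h) := by
  have hφ : HasDerivAt (fun v => v - θ u) 1 t := (hasDerivAt_id t).sub_const _
  have hX := hφ.frame (hasDerivAt_const t (r u)) (hasDerivAt_const t 0)
    ((hφ.const_mul h).const_add (l u))
  exact hX.deriv.trans (by congr 1; simp)

theorem pd2_pd2_helicoid (u t : ℝ) :
    pd2 (pd2 (helicoid h r l θ)) u t = frame (t - θ u) (-r u, 0, 0) := by
  have hφ : HasDerivAt (fun v => v - θ u) 1 t := (hasDerivAt_id t).sub_const _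
  have hX := hφ.frame (hasDerivAt_const t 0) (hasDerivAt_const t (-r u)) (hasDerivAt_const t h)
  rw [pd2, funext (pd2_helicoid u)]
  exact hX.deriv.trans (by congr 1; simp)

section Pointwise

variable {u r' l' θ' : ℝ}

theorem pd1_helicoid (hr : HasDerivAt r r' u) (hl : HasDerivAt l l' u) (hθ : HasDerivAt θ θ' u)
    (t : ℝ) : pd1 (helicoid h r l θ) u t = frame (t - θ u) (r', r u * θ', l' - h * θ') := by
  have hφ : HasDerivAt (fun v => t - θ v) (-θ') u := hθ.const_sub t
  have hX := hφ.frame hr (hasDerivAt_const u 0) (hl.add (hφ.const_mul h))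
  exact hX.deriv.trans (by congr 1; ext <;> simp only <;> ring)

theorem pd2_pd1_helicoid (hr : HasDerivAt r r' u) (hl : HasDerivAt l l' u)
    (hθ : HasDerivAt θ θ' u) (t : ℝ) :
    pd2 (pd1 (helicoid h r l θ)) u t = frame (t - θ u) (r u * θ', -r', 0) := by
  have hφ : HasDerivAt (fun v => v - θ u) 1 t := (hasDerivAt_id t).sub_const _
  have hX := hφ.frame (hasDerivAt_const t r') (hasDerivAt_const t (r u * θ'))
    (hasDerivAt_const t (l' - h * θ'))
  rw [pd2, funext (pd1_helicoid hr hl hθ)]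
  exact hX.deriv.trans (by congr 1; ext <;> simp only <;> ring)

theorem cross3_pd1_pd2_helicoid (hr : HasDerivAt r r' u) (hl : HasDerivAt l l' u)
    (hθ : HasDerivAt θ θ' u) (t : ℝ) :
    cross3 (pd1 (helicoid h r l θ) u t) (pd2 (helicoid h r l θ) u t)
      = frame (t - θ u) (-(r u * l'), h * r', r u * r') := by
  rw [pd1_helicoid hr hl hθ, pd2_helicoid, cross3_frame]
  congr 1; ext <;> simp only [cross3] <;> ring

theorem angleFun_helicoid (hr : HasDerivAt r r' u) (hl : HasDerivAt l l' u)
    (hθ : HasDerivAt θ θ' u) (t : ℝ) :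
    angleFun (helicoid h r l θ) u t
      = r u * r' / √((r u * l') ^ 2 + (h * r') ^ 2 + (r u * r') ^ 2) := by
  rw [angleFun_eq_div_sqrt (cross3_pd1_pd2_helicoid hr hl hθ t), dot3_frame]
  simp only [frame, dot3]
  ring_nf

end Pointwise

theorem pd1_pd1_helicoid {u : ℝ} {r' l' θ' : ℝ → ℝ} {r'' l'' θ'' : ℝ}
    (hr : ∀ᶠ v in 𝓝 u, HasDerivAt r (r' v) v) (hl : ∀ᶠ v in 𝓝 u, HasDerivAt l (l' v) v)
    (hθ : ∀ᶠ v in 𝓝 u, HasDerivAt θ (θ' v) v) (hr' : HasDerivAt r' r'' u)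
    (hl' : HasDerivAt l' l'' u) (hθ' : HasDerivAt θ' θ'' u) (t : ℝ) :
    pd1 (pd1 (helicoid h r l θ)) u t = frame (t - θ u)
      (r'' - r u * θ' u ^ 2, 2 * r' u * θ' u + r u * θ'', l'' - h * θ'') := by
  have hpd1 : (fun v => pd1 (helicoid h r l θ) v t)
      =ᶠ[𝓝 u] fun v => frame (t - θ v) (r' v, r v * θ' v, l' v - h * θ' v) := by
    filter_upwards [hr, hl, hθ] with v hrv hlv hθv using pd1_helicoid hrv hlv hθv t
  have hX := ((hθ.self_of_nhds).const_sub t).frame hr' ((hr.self_of_nhds).mul hθ')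
    (hl'.sub (hθ'.const_mul h))
  rw [pd1, hpd1.deriv_eq]
  exact hX.deriv.trans (by congr 1; ext <;> simp only [Pi.mul_apply] <;> ring)

theorem gauss_helicoid {u : ℝ} {r' l' θ' : ℝ → ℝ} {r'' l'' θ'' : ℝ}
    (hr : ∀ᶠ v in 𝓝 u, HasDerivAt r (r' v) v) (hl : ∀ᶠ v in 𝓝 u, HasDerivAt l (l' v) v)
    (hθ : ∀ᶠ v in 𝓝 u, HasDerivAt θ (θ' v) v) (hr' : HasDerivAt r' r'' u)
    (hl' : HasDerivAt l' l'' u) (hθ' : HasDerivAt θ' θ'' u) (t : ℝ) :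
    gauss (helicoid h r l θ) u t
      = ((-(r'' - r u * θ' u ^ 2) * (r u * l' u) + 2 * h * r' u ^ 2 * θ' u + r u * r' u * l'')
          * (r u ^ 2 * l' u) - (r u ^ 2 * θ' u * l' u + h * r' u ^ 2) ^ 2)
        / ((r u * l' u) ^ 2 + (h * r' u) ^ 2 + (r u * r' u) ^ 2) ^ 2 := by
  have hr₀ := hr.self_of_nhds
  have hl₀ := hl.self_of_nhds
  have hθ₀ := hθ.self_of_nhds
  rw [gauss_eq_div_sq (cross3_pd1_pd2_helicoid hr₀ hl₀ hθ₀ t),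
    pd1_pd1_helicoid hr hl hθ hr' hl' hθ' t, pd2_pd2_helicoid, pd2_pd1_helicoid hr₀ hl₀ hθ₀,
    dot3_frame, dot3_frame, dot3_frame, dot3_frame]
  simp only [dot3]
  ring_nf

end Helicoid

theorem DifferentiableOn.eventually_hasDerivAt {f f' : ℝ → ℝ} {I : Set ℝ} {u : ℝ}
    (hf : DifferentiableOn ℝ f I) (hI : IsOpen I) (hf' : ∀ v ∈ I, _root_.deriv f v = f' v)
    (hu : u ∈ I) :
    ∀ᶠ v in 𝓝 u, HasDerivAt f (f' v) v := by
  filter_upwards [hI.mem_nhds hu] with v hv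
  exact hf' v hv ▸ ((hf v hv).differentiableAt (hI.mem_nhds hv)).hasDerivAt

def heightSlope (h c u : ℝ) : ℝ :=
  u / (u ^ 2 - h ^ 2) * √(u ^ 4 + (c - 1 - h ^ 2) * u ^ 2 - h ^ 2 * c)

section Profile

variable {h c u : ℝ}

theorem hasDerivAt_sqrt_sq_sub_sq (hu : 0 < u ^ 2 - h ^ 2) :
    HasDerivAt (fun v => √(v ^ 2 - h ^ 2)) (u / √(u ^ 2 - h ^ 2)) u := by
  have hd : HasDerivAt (fun v => v ^ 2 - h ^ 2) (2 * u) u := by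
    simpa using (hasDerivAt_pow 2 u).sub_const (h ^ 2)
  exact (hd.sqrt hu.ne').congr_deriv (by field_simp)

theorem hasDerivAt_div_sqrt_sq_sub_sq (hu : 0 < u ^ 2 - h ^ 2) :
    HasDerivAt (fun v => v / √(v ^ 2 - h ^ 2)) (-h ^ 2 / √(u ^ 2 - h ^ 2) ^ 3) u := by
  have hr : 0 < √(u ^ 2 - h ^ 2) := sqrt_pos.mpr hu
  refine ((hasDerivAt_id' u).div (hasDerivAt_sqrt_sq_sub_sq hu) hr.ne').congr_deriv ?_
  field_simp
  rw [sq_sqrt hu.le]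
  ring

theorem hasDerivAt_heightSlope (hu : 0 < u ^ 2 - h ^ 2)
    (hP : 0 < u ^ 4 + (c - 1 - h ^ 2) * u ^ 2 - h ^ 2 * c) :
    HasDerivAt (heightSlope h c)
      (-(u ^ 2 + h ^ 2) / (u ^ 2 - h ^ 2) ^ 2 * √(u ^ 4 + (c - 1 - h ^ 2) * u ^ 2 - h ^ 2 * c)
        + u / (u ^ 2 - h ^ 2)
          * ((2 * u ^ 3 + (c - 1 - h ^ 2) * u) / √(u ^ 4 + (c - 1 - h ^ 2) * u ^ 2 - h ^ 2 * c)))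
      u := by
  have hd : HasDerivAt (fun v => v ^ 2 - h ^ 2) (2 * u) u := by
    simpa using (hasDerivAt_pow 2 u).sub_const (h ^ 2)
  have hPd : HasDerivAt (fun v => v ^ 4 + (c - 1 - h ^ 2) * v ^ 2 - h ^ 2 * c)
      (4 * u ^ 3 + (c - 1 - h ^ 2) * (2 * u)) u := by
    simpa using ((hasDerivAt_pow 4 u).add
      ((hasDerivAt_pow 2 u).const_mul (c - 1 - h ^ 2))).sub_const (h ^ 2 * c)
  refine (((hasDerivAt_id' u).div hd hu.ne').mul (hPd.sqrt hP.ne')).congr_deriv ?_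
  set q := √(u ^ 4 + (c - 1 - h ^ 2) * u ^ 2 - h ^ 2 * c)
  have hq : 0 < q := sqrt_pos.mpr hP
  simp only [Pi.div_apply]
  field_simp
  ring

end Profile

theorem heightProfile_curvature {h c U r q r' r'' l' l'' θ' : ℝ} (hU : 0 < U) (hr : 0 < r)
    (hq : 0 < q) (hc : 0 < U ^ 2 + c) (hr2 : r ^ 2 = U ^ 2 - h ^ 2)
    (hq2 : q ^ 2 = U ^ 4 + (c - 1 - h ^ 2) * U ^ 2 - h ^ 2 * c)
    (hr' : r' = U / r) (hr'' : r'' = -h ^ 2 / r ^ 3) (hl' : l' = U / (U ^ 2 - h ^ 2) * q)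
    (hθ' : θ' = h / U ^ 2 * l')
    (hl'' : l'' = -(U ^ 2 + h ^ 2) / (U ^ 2 - h ^ 2) ^ 2 * q
      + U / (U ^ 2 - h ^ 2) * ((2 * U ^ 3 + (c - 1 - h ^ 2) * U) / q)) :
    ((-(r'' - r * θ' ^ 2) * (r * l') + 2 * h * r' ^ 2 * θ' + r * r' * l'') * (r ^ 2 * l')
        - (r ^ 2 * θ' * l' + h * r' ^ 2) ^ 2) / ((r * l') ^ 2 + (h * r') ^ 2 + (r * r') ^ 2) ^ 2
      = 1 / (U ^ 2 + c) ^ 2 ∧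
    (r * r' / √((r * l') ^ 2 + (h * r') ^ 2 + (r * r') ^ 2)) ^ 4 = 1 / (U ^ 2 + c) ^ 2 := by
  subst hr' hr'' hθ' hl' hl''
  rw [← hr2]
  have hnormSq : (r * (U / r ^ 2 * q)) ^ 2 + (h * (U / r)) ^ 2 + (r * (U / r)) ^ 2
      = U ^ 2 * (U ^ 2 + c) := by
    field_simp
    linear_combination hq2 - (U ^ 2 + c - 1) * hr2
  have hnum : (-(-h ^ 2 / r ^ 3 - r * (h / U ^ 2 * (U / r ^ 2 * q)) ^ 2) * (r * (U / r ^ 2 * q))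
        + 2 * h * (U / r) ^ 2 * (h / U ^ 2 * (U / r ^ 2 * q))
        + r * (U / r) * (-(U ^ 2 + h ^ 2) / (r ^ 2) ^ 2 * q
          + U / r ^ 2 * ((2 * U ^ 3 + (c - 1 - h ^ 2) * U) / q)))
        * (r ^ 2 * (U / r ^ 2 * q))
      - (r ^ 2 * (h / U ^ 2 * (U / r ^ 2 * q)) * (U / r ^ 2 * q) + h * (U / r) ^ 2) ^ 2
      = U ^ 4 := by
    field_simp
    linear_combination -U ^ 4 * hq2 + U ^ 4 * (U ^ 2 + c - 1 - r ^ 2) * hr2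
  have hw : √(U ^ 2 * (U ^ 2 + c)) ^ 4 = (U ^ 2 * (U ^ 2 + c)) ^ 2 := by
    rw [show (4 : ℕ) = 2 * 2 by rfl, pow_mul, sq_sqrt (by positivity)]
  rw [hnormSq, hnum, div_pow, hw]
  constructor <;> field_simp

theorem helicoidal_translator_general
    (h c : ℝ) (I : Set ℝ) (hIopen : IsOpen I)
    (hIpos : I ⊆ Set.Ioi (0 : ℝ))
    (hUh : ∀ U ∈ I, 0 < U ^ 2 - h ^ 2)
    (hUc : ∀ U ∈ I, 0 < U ^ 2 + c)
    (hP : ∀ U ∈ I, 0 < U ^ 4 + (c - 1 - h ^ 2) * U ^ 2 - h ^ 2 * c)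
    (R Λ Θ : ℝ → ℝ)
    (hΛC : ContDiffOn ℝ 2 Λ I) (hΘC : ContDiffOn ℝ 2 Θ I)
    (hR : ∀ U ∈ I, R U = Real.sqrt (U ^ 2 - h ^ 2))
    (hΛ' : ∀ U ∈ I, deriv Λ U =
      (U / (U ^ 2 - h ^ 2)) * Real.sqrt (U ^ 4 + (c - 1 - h ^ 2) * U ^ 2 - h ^ 2 * c))
    (hΘ' : ∀ U ∈ I, deriv Θ U = (h / U ^ 2) * deriv Λ U)
    (X : ℝ → ℝ → ℝ × ℝ × ℝ)
    (hX : ∀ U t, X U t =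
      (R U * Real.cos (t - Θ U), R U * Real.sin (t - Θ U), Λ U + h * (t - Θ U))) :
    ∀ U ∈ I, ∀ t : ℝ,
      gauss X U t = 1 / (U ^ 2 + c) ^ 2 ∧
      (angleFun X U t) ^ 4 = 1 / (U ^ 2 + c) ^ 2 ∧
      gauss X U t = (angleFun X U t) ^ 4 := by
  obtain rfl : X = helicoid h R Λ Θ := by
    funext u t
    simp [hX, helicoid, frame]
  intro U hU t
  have hRd : ∀ᶠ v in 𝓝 U, HasDerivAt R (v / √(v ^ 2 - h ^ 2)) v := by
    filter_upwards [hIopen.mem_nhds hU] with v hv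
    exact (hasDerivAt_sqrt_sq_sub_sq (hUh v hv)).congr_of_eventuallyEq
      (eventuallyEq_of_mem (hIopen.mem_nhds hv) hR)
  have hΛd : ∀ᶠ v in 𝓝 U, HasDerivAt Λ (heightSlope h c v) v :=
    (hΛC.differentiableOn two_ne_zero).eventually_hasDerivAt hIopen hΛ' hU
  have hΘd : ∀ᶠ v in 𝓝 U, HasDerivAt Θ (h / v ^ 2 * heightSlope h c v) v :=
    (hΘC.differentiableOn two_ne_zero).eventually_hasDerivAt hIopen
      (fun v hv => by rw [hΘ' v hv, hΛ' v hv, heightSlope]) hU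
  have hslope := hasDerivAt_heightSlope (hUh U hU) (hP U hU)
  have hΘ'd : HasDerivAt (fun v => h / v ^ 2 * heightSlope h c v) _ U :=
    ((hasDerivAt_const U h).div (hasDerivAt_pow 2 U) (pow_pos (hIpos hU) 2).ne').mul hslope
  obtain ⟨hK, hn⟩ := heightProfile_curvature (hIpos hU) (sqrt_pos.mpr (hUh U hU))
    (sqrt_pos.mpr (hP U hU)) (hUc U hU) (sq_sqrt (hUh U hU).le) (sq_sqrt (hP U hU).le)
    rfl rfl rfl rfl rfl
  have hgauss : gauss (helicoid h R Λ Θ) U t = 1 / (U ^ 2 + c) ^ 2 := by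
    rw [gauss_helicoid hRd hΛd hΘd (hasDerivAt_div_sqrt_sq_sub_sq (hUh U hU)) hslope hΘ'd t,
      hR U hU]
    exact hK
  have hangle : angleFun (helicoid h R Λ Θ) U t ^ 4 = 1 / (U ^ 2 + c) ^ 2 := by
    rw [angleFun_helicoid hRd.self_of_nhds hΛd.self_of_nhds hΘd.self_of_nhds t, hR U hU]
    exact hn
  exact ⟨hgauss, hangle, hgauss.trans hangle.symm⟩

/-- On the helicoidal patch `H^h_c` the Gaussian curvature equals
`1/(U² + c)²` and the fourth power of the angle function equals `1/(U² + c)²`; hence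
`K = n₃⁴`, i.e. each `H^h_c` is a `K^{1/4}`-translator. -/
theorem helicoidal_translator
    (h c : ℝ) (I : Set ℝ) (hIopen : IsOpen I) (hIconn : I.OrdConnected)
    (hIpos : I ⊆ Set.Ioi (0 : ℝ))
    (hUh : ∀ U ∈ I, 0 < U ^ 2 - h ^ 2)
    (hUc : ∀ U ∈ I, 0 < U ^ 2 + c)
    (hP : ∀ U ∈ I, 0 < U ^ 4 + (c - 1 - h ^ 2) * U ^ 2 - h ^ 2 * c)
    (R Λ Θ : ℝ → ℝ)
    (hRC : ContDiffOn ℝ 2 R I) (hΛC : ContDiffOn ℝ 2 Λ I) (hΘC : ContDiffOn ℝ 2 Θ I)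
    (hR : ∀ U ∈ I, R U = Real.sqrt (U ^ 2 - h ^ 2))
    (hΛ' : ∀ U ∈ I, deriv Λ U =
      (U / (U ^ 2 - h ^ 2)) * Real.sqrt (U ^ 4 + (c - 1 - h ^ 2) * U ^ 2 - h ^ 2 * c))
    (hΘ' : ∀ U ∈ I, deriv Θ U = (h / U ^ 2) * deriv Λ U)
    (X : ℝ → ℝ → ℝ × ℝ × ℝ)
    (hX : ∀ U t, X U t =
      (R U * Real.cos (t - Θ U), R U * Real.sin (t - Θ U), Λ U + h * (t - Θ U))) :
    ∀ U ∈ I, ∀ t : ℝ,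
      gauss X U t = 1 / (U ^ 2 + c) ^ 2 ∧
      (angleFun X U t) ^ 4 = 1 / (U ^ 2 + c) ^ 2 ∧
      gauss X U t = (angleFun X U t) ^ 4 :=
  helicoidal_translator_general h c I hIopen hIpos hUh hUc hP R Λ Θ hΛC hΘC hR hΛ' hΘ' X hX
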